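/- arXiv:2009.03676 — 5 statements merged into one kernel-verified Lean document; each statement's English description precedes it below -/
import Mathlib

section
/- A loop satisfying the Osborn identity x(yz·x) = (x^λ\y)·(zx) (where x^λ is the left inverse of x) that additionally satisfies the flexible law x(yx) = (xy)x is a Moufang loop. -/
/-- A quasigroup: a magma with left and right division. -/
class Quasigroup (Q : Type*) extends Mul Q where
  ldiv : Q → Q → Q
  rdiv : Q → Q → Q
  mul_ldiv : ∀ a b : Q, a * ldiv a b = b
  ldiv_mul : ∀ a b : Q, ldiv a (a * b) = b
  rdiv_mul : ∀ a b : Q, rdiv a b * b = a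
  mul_rdiv : ∀ a b : Q, rdiv (a * b) b = a

/-- A loop: a quasigroup with a two-sided identity. -/
class Loop (Q : Type*) extends Quasigroup Q, One Q where
  one_mul : ∀ a : Q, 1 * a = a
  mul_one : ∀ a : Q, a * 1 = a

open Quasigroup

/-- Left translation `L_a : y ↦ a·y` as a permutation. -/
def lt {Q : Type*} [Quasigroup Q] (a : Q) : Equiv.Perm Q :=
  ⟨(a * ·), ldiv a, fun b => ldiv_mul a b, fun b => mul_ldiv a b⟩

/-- Right translation `R_a : y ↦ y·a` as a permutation. -/
def rt {Q : Type*} [Quasigroup Q] (a : Q) : Equiv.Perm Q :=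
  ⟨(· * a), fun b => rdiv b a, fun b => mul_rdiv b a, fun b => rdiv_mul b a⟩

/-- The multiplication group: generated by all left and right translations. -/
def MultGroup (Q : Type*) [Quasigroup Q] : Subgroup (Equiv.Perm Q) :=
  Subgroup.closure (Set.range (lt (Q := Q)) ∪ Set.range (rt (Q := Q)))

/-- The left inverse `x^λ` (satisfying `x^λ * x = 1`). -/
def lam {Q : Type*} [Loop Q] (x : Q) : Q := rdiv 1 x

/-- The right inverse `x^ρ` (satisfying `x * x^ρ = 1`). -/
def rinv {Q : Type*} [Loop Q] (x : Q) : Q := ldiv x 1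

/-! Putting `z = 1` in the Osborn identity gives `x(yx) = (x^λ\y)x`, so flexibility and right
cancellation yield `x^λ\y = xy`; fed back into the Osborn identity this is the Moufang identity,
up to one more use of flexibility. -/

theorem Quasigroup.mul_right_cancel {Q : Type*} [Quasigroup Q] {a b c : Q} (h : a * c = b * c) :
    a = b := by
  rw [← mul_rdiv a c, h, mul_rdiv]

theorem ldiv_lam_eq_mul {Q : Type*} [Loop Q] {x y : Q}
    (hOs : x * (y * x) = ldiv (lam x) y * x) (hflex : x * (y * x) = (x * y) * x) :
    ldiv (lam x) y = x * y :=
  Quasigroup.mul_right_cancel (hOs.symm.trans hflex)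

theorem stmt7 (Q : Type*) [Loop Q]
    (hOs : ∀ x y z : Q, x * ((y * z) * x) = Quasigroup.ldiv (lam x) y * (z * x))
    (hflex : ∀ x y : Q, x * (y * x) = (x * y) * x) :
    ∀ x y z : Q, (x * y) * (z * x) = (x * (y * z)) * x := by
  have hldiv : ∀ x y : Q, ldiv (lam x) y = x * y := fun x y =>
    ldiv_lam_eq_mul (by simpa only [Loop.mul_one, Loop.one_mul] using hOs x y 1) (hflex x y)
  intro x y z
  calc (x * y) * (z * x) = ldiv (lam x) y * (z * x) := by rw [hldiv]
    _ = x * ((y * z) * x) := (hOs x y z).symm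
    _ = (x * (y * z)) * x := hflex x (y * z)
end

section
/- A loop satisfying the Osborn identity x(yz·x) = (x^λ\y)·(zx) that additionally has the left inverse property x^λ(xy) = y for all x, y is a Moufang loop. -/
open Quasigroup

namespace Loop

variable {Q : Type*} [Loop Q]

theorem ldiv_eq_lam_mul (hlip : ∀ x y : Q, lam x * (x * y) = y) (a b : Q) :
    ldiv a b = lam a * b := by
  conv_lhs => rw [← hlip a (ldiv a b), mul_ldiv]

theorem mul_lam_self (hlip : ∀ x y : Q, lam x * (x * y) = y) (x : Q) : x * lam x = 1 := by
  have hlam : lam x = rinv x := by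
    simpa only [rinv, mul_ldiv, Loop.mul_one] using hlip x (rinv x)
  rw [hlam, rinv, mul_ldiv]

theorem lam_lam (hlip : ∀ x y : Q, lam x * (x * y) = y) (x : Q) : lam (lam x) = x := by
  have h := mul_rdiv x (lam x)
  rwa [mul_lam_self hlip] at h

theorem mul_mul_mul_eq_of_osborn
    (hOs : ∀ x y z : Q, x * ((y * z) * x) = ldiv (lam x) y * (z * x))
    (hlip : ∀ x y : Q, lam x * (x * y) = y) (x y z : Q) :
    x * ((y * z) * x) = (x * y) * (z * x) := by
  rw [hOs, ldiv_eq_lam_mul hlip, lam_lam hlip]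

theorem flexible_of_mul_mul_mul_eq
    (h : ∀ x y z : Q, x * ((y * z) * x) = (x * y) * (z * x)) (x y : Q) :
    x * (y * x) = (x * y) * x := by
  simpa only [Loop.mul_one, Loop.one_mul] using h x y 1

end Loop

theorem stmt8 (Q : Type*) [Loop Q]
    (hOs : ∀ x y z : Q, x * ((y * z) * x) = Quasigroup.ldiv (lam x) y * (z * x))
    (hlip : ∀ x y : Q, lam x * (x * y) = y) :
    ∀ x y z : Q, (x * y) * (z * x) = (x * (y * z)) * x := by
  have hOs' := Loop.mul_mul_mul_eq_of_osborn hOs hlip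
  intro x y z
  rw [← hOs', Loop.flexible_of_mul_mul_mul_eq hOs']
end

section
/- A loop of exponent 2 (every element satisfies x·x = e) that satisfies the Osborn identity x(yz·x) = (x^λ\y)·(zx) is an abelian group. -/
open Quasigroup

/-!
In a loop of exponent 2 every element is its own left inverse, and the Osborn identity with
`z = y` then reads `1 = (x\y)·(yx)`, forcing `x\y = yx`. Substituting this back, the identity
becomes `yz = (yx)·(zx)`: taking `x = y` gives commutativity, and since `(zx)x = z` the
substitution `z ↦ zy` gives associativity.
-/

theorem Quasigroup.mul_left_cancel {Q : Type*} [Quasigroup Q] {a b c : Q} (h : a * b = a * c) :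
    b = c := by
  rw [← ldiv_mul a b, h, ldiv_mul]

theorem lam_eq_self_of_mul_self {Q : Type*} [Loop Q] {x : Q} (hx : x * x = 1) : lam x = x := by
  rw [lam, ← hx, mul_rdiv]

def OsbornIdentity (Q : Type*) [Loop Q] : Prop :=
  ∀ x y z : Q, x * ((y * z) * x) = ldiv (lam x) y * (z * x)

namespace OsbornIdentity

variable {Q : Type*} [Loop Q]

theorem ldiv_eq_mul (hOs : OsbornIdentity Q) (hexp2 : ∀ x : Q, x * x = 1) (x y : Q) :
    ldiv x y = y * x := by
  have h := hOs x y y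
  rw [hexp2, Loop.one_mul, hexp2, lam_eq_self_of_mul_self (hexp2 x)] at h
  exact Quasigroup.mul_left_cancel ((hexp2 _).trans h)

theorem mul_eq_mul_mul_mul (hOs : OsbornIdentity Q) (hexp2 : ∀ x : Q, x * x = 1) (x y z : Q) :
    y * z = (y * x) * (z * x) := by
  calc y * z = x * ldiv x (y * z) := (mul_ldiv x _).symm
    _ = x * ((y * z) * x) := by rw [ldiv_eq_mul hOs hexp2]
    _ = (y * x) * (z * x) := by
      rw [hOs, lam_eq_self_of_mul_self (hexp2 x), ldiv_eq_mul hOs hexp2]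

theorem mul_comm (hOs : OsbornIdentity Q) (hexp2 : ∀ x : Q, x * x = 1) (x y : Q) :
    x * y = y * x := by
  rw [mul_eq_mul_mul_mul hOs hexp2 x x y, hexp2, Loop.one_mul]

theorem mul_mul_self_right (hOs : OsbornIdentity Q) (hexp2 : ∀ x : Q, x * x = 1) (x z : Q) :
    (z * x) * x = z := by
  rw [mul_comm hOs hexp2 z x, ← ldiv_eq_mul hOs hexp2, ldiv_mul]

theorem mul_assoc (hOs : OsbornIdentity Q) (hexp2 : ∀ x : Q, x * x = 1) (x y z : Q) :
    (x * y) * z = x * (y * z) := by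
  calc (x * y) * z = (x * y) * ((z * y) * y) := by rw [mul_mul_self_right hOs hexp2]
    _ = x * (z * y) := (mul_eq_mul_mul_mul hOs hexp2 y x (z * y)).symm
    _ = x * (y * z) := by rw [mul_comm hOs hexp2 z y]

end OsbornIdentity

theorem stmt10 (Q : Type*) [Loop Q]
    (hOs : ∀ x y z : Q, x * ((y * z) * x) = Quasigroup.ldiv (lam x) y * (z * x))
    (hexp2 : ∀ x : Q, x * x = 1) :
    (∀ x y : Q, x * y = y * x) ∧ (∀ x y z : Q, (x * y) * z = x * (y * z)) :=
  ⟨OsbornIdentity.mul_comm hOs hexp2, OsbornIdentity.mul_assoc hOs hexp2⟩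
end

section
/- A loop satisfying the Osborn identity x(yz·x) = (x^λ\y)·(zx) that additionally has the cross inverse property (xy)·x^ρ = y for all x, y is a commutative Moufang loop. -/
open Quasigroup

/-!
The cross inverse property identifies `x^λ \ y` with `y · x`, so the Osborn identity becomes
`x · (yz · x) = yx · zx`. Taking `z = 1` and `y = u / x` gives `xu = ux`, and with commutativity
this identity is the Moufang identity.
-/

section

variable {Q : Type*} [Loop Q]

theorem rinv_lam (x : Q) : rinv (lam x) = x := by
  have h : ldiv (lam x) (lam x * x) = x := ldiv_mul _ _
  rwa [show lam x * x = 1 from rdiv_mul 1 x] at h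

theorem mul_rinv_eq_ldiv (hcip : ∀ x y : Q, (x * y) * rinv x = y) (w z : Q) :
    z * rinv w = ldiv w z := by
  simpa only [mul_ldiv] using hcip w (ldiv w z)

theorem mul_mul_mul_eq_of_osborn_of_cip
    (hOs : ∀ x y z : Q, x * ((y * z) * x) = ldiv (lam x) y * (z * x))
    (hcip : ∀ x y : Q, (x * y) * rinv x = y) (x y z : Q) :
    x * ((y * z) * x) = (y * x) * (z * x) := by
  rw [hOs, ← mul_rinv_eq_ldiv hcip (lam x) y, rinv_lam]

theorem mul_comm_of_mul_mul_mul_eq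
    (hQ : ∀ x y z : Q, x * ((y * z) * x) = (y * x) * (z * x)) (x u : Q) : x * u = u * x := by
  simpa only [Loop.mul_one, rdiv_mul, Loop.one_mul] using hQ x (rdiv u x) 1

theorem moufang_of_mul_mul_mul_eq
    (hQ : ∀ x y z : Q, x * ((y * z) * x) = (y * x) * (z * x)) (x y z : Q) :
    (x * y) * (z * x) = (x * (y * z)) * x := by
  have comm := mul_comm_of_mul_mul_mul_eq hQ
  calc (x * y) * (z * x) = (y * x) * (z * x) := by rw [comm x y]
    _ = x * ((y * z) * x) := (hQ x y z).symm
    _ = x * (x * (y * z)) := by rw [comm (y * z) x]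
    _ = (x * (y * z)) * x := comm _ _

end

theorem stmt11 (Q : Type*) [Loop Q]
    (hOs : ∀ x y z : Q, x * ((y * z) * x) = Quasigroup.ldiv (lam x) y * (z * x))
    (hcip : ∀ x y : Q, (x * y) * rinv x = y) :
    (∀ x y : Q, x * y = y * x) ∧
    (∀ x y z : Q, (x * y) * (z * x) = (x * (y * z)) * x) := by
  have hQ := mul_mul_mul_eq_of_osborn_of_cip hOs hcip
  exact ⟨mul_comm_of_mul_mul_mul_eq hQ, moufang_of_mul_mul_mul_eq hQ⟩
end

section
/- In an Osborn loop, if the left and right inverse maps coincide (J_λ = J_ρ, i.e., x^λ = x^ρ for all x), then the loop satisfies the 3-power associative property xx·x = x·xx for all x, and conversely. -/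
open Quasigroup

/-!
In an Osborn loop, specialising the Osborn law at `(x, x^λλ, x^λ)` and at `(x, x, 1)` gives
`x·x = x^λ \ x^λλ` and `x·(x·x) = (x^λ \ x)·x`. Cancelling `x` on the right, the 3-PAP at `x`
becomes `x·x = x^λ \ x`, i.e. `x^λλ = x`; and in any loop `x^λλ = x` for all `x` is the same as
`x^λ = x^ρ` for all `x`.
-/

namespace Quasigroup

variable {Q : Type*} [Quasigroup Q]

theorem ldiv_right_injective (a : Q) : Function.Injective (ldiv a) := fun b c h => by
  rw [← mul_ldiv a b, h, mul_ldiv]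

theorem mul_left_injective (a : Q) : Function.Injective (· * a) := fun b c h => by
  rw [← mul_rdiv b a, ← mul_rdiv c a]
  exact congrArg (rdiv · a) h

end Quasigroup

section Inverses

variable {Q : Type*} [Loop Q]

theorem lam_mul (x : Q) : lam x * x = 1 := rdiv_mul 1 x

theorem lam_rinv (x : Q) : lam (rinv x) = x := by
  rw [lam, ← mul_ldiv x 1]
  exact mul_rdiv x (rinv x)

theorem forall_lam_eq_rinv_iff : (∀ x : Q, lam x = rinv x) ↔ ∀ x : Q, lam (lam x) = x := by
  constructor
  · intro h x
    rw [h (lam x), rinv_lam]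
  · intro h x
    rw [← h (rinv x), lam_rinv]

end Inverses

def IsOsborn (Q : Type*) [Loop Q] : Prop :=
  ∀ x y z : Q, x * ((y * z) * x) = ldiv (lam x) y * (z * x)

namespace IsOsborn

variable {Q : Type*} [Loop Q] (hOs : IsOsborn Q)
include hOs

theorem mul_self_eq (x : Q) : x * x = ldiv (lam x) (lam (lam x)) := by
  simpa only [lam_mul, Loop.one_mul, Loop.mul_one] using hOs x (lam (lam x)) (lam x)

theorem mul_mul_self_eq (x : Q) : x * (x * x) = ldiv (lam x) x * x := by
  simpa only [Loop.one_mul, Loop.mul_one] using hOs x x 1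

theorem mul_self_mul_self_iff (x : Q) : (x * x) * x = x * (x * x) ↔ lam (lam x) = x := by
  rw [hOs.mul_mul_self_eq, (mul_left_injective x).eq_iff, hOs.mul_self_eq,
    (ldiv_right_injective _).eq_iff]

end IsOsborn

theorem stmt18_general (Q : Type*) [Loop Q]
    (hOs : ∀ x y z : Q, x * ((y * z) * x) = Quasigroup.ldiv (lam x) y * (z * x)) :
    (∀ x : Q, lam x = rinv x) ↔ (∀ x : Q, (x * x) * x = x * (x * x)) := by
  rw [forall_lam_eq_rinv_iff]
  exact forall_congr' fun x => (IsOsborn.mul_self_mul_self_iff hOs x).symm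

theorem stmt18 (Q : Type*) [Loop Q]
    (hOs : ∀ x y z : Q, x * ((y * z) * x) = Quasigroup.ldiv (lam x) y * (z * x))
    (hU : ∀ u v : Q,
      -- the u,v-principal isotope multiplication, left division and left inverse
      (fun mul' ldiv' lam' =>
        ∀ x y z : Q, mul' x (mul' (mul' y z) x) = mul' (ldiv' (lam' x) y) (mul' z x))
      (fun a b : Q => Quasigroup.rdiv a v * Quasigroup.ldiv u b)
      (fun a b : Q => u * Quasigroup.ldiv (Quasigroup.rdiv a v) b)
      (fun a : Q => Quasigroup.rdiv (u * v) (Quasigroup.ldiv u a) * v)) :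
    (∀ x : Q, lam x = rinv x) ↔ (∀ x : Q, (x * x) * x = x * (x * x)) :=
  stmt18_general Q hOs
end
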